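/- arXiv:1508.06155 — 4 statements merged into one kernel-verified Lean document; each statement's English description precedes it below -/
import Mathlib

section
/- For all real numbers 0 < q < 1, C > 0 and 0 < θ ≤ 1 there exist 0 < q_est < 1 and C_est > 0, depending only on q, C and θ, with the following property: whenever nonnegative real numbers ρ_R, ρ_N, ρ'_R, ρ'_N, d satisfy (i) |ρ'_N − ρ_N| ≤ C·d, (ii) (ρ'_R)² ≤ q·ρ_R² + C·d², and (iii) θ·(ρ_R² + ρ_N²) ≤ ρ_R², then (ρ'_R)² + (ρ'_N)² ≤ q_est·(ρ_R² + ρ_N²) + C_est·d². Moreover, one may take q_est = 1 + ε − θ·(1 + ε − q) for any ε > 0 small enough that 1 + ε − θ·(1 + ε − q) < 1. -/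
lemma estimator_core (q C θ ε : ℝ) (hq0 : 0 < q) (hq1 : q < 1) (hC : 0 < C) (hθ0 : 0 < θ)
    (hε : 0 < ε) :
    ∀ ρR ρN ρR' ρN' d : ℝ, 0 ≤ ρR → 0 ≤ ρN → 0 ≤ ρR' → 0 ≤ ρN' → 0 ≤ d →
      |ρN' - ρN| ≤ C * d → ρR' ^ 2 ≤ q * ρR ^ 2 + C * d ^ 2 →
      θ * (ρR ^ 2 + ρN ^ 2) ≤ ρR ^ 2 →
      ρR' ^ 2 + ρN' ^ 2 ≤ (1 + ε - θ * (1 + ε - q)) * (ρR ^ 2 + ρN ^ 2)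
        + (C + (1 + 1/ε) * C ^ 2) * d ^ 2 := by
  intro ρR ρN ρR' ρN' d hρR hρN hρR' hρN' hd habs hred hdorf
  have h1 : ρN' ≤ ρN + C * d := by
    have := abs_le.mp habs
    linarith [this.2]
  have hsq : ρN' ^ 2 ≤ ρN ^ 2 + 2 * ρN * (C * d) + C ^ 2 * d ^ 2 := by
    nlinarith [pow_le_pow_left₀ hρN' h1 2]
  have hεne : ε ≠ 0 := ne_of_gt hε
  have hyoung : 2 * ρN * (C * d) ≤ ε * ρN ^ 2 + 1/ε * (C ^ 2 * d ^ 2) := by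
    have h2 : ε * (ε * ρN ^ 2 + 1/ε * (C ^ 2 * d ^ 2))
        = ε ^ 2 * ρN ^ 2 + C ^ 2 * d ^ 2 := by field_simp
    have key : ε * (2 * ρN * (C * d)) ≤ ε * (ε * ρN ^ 2 + 1/ε * (C ^ 2 * d ^ 2)) := by
      rw [h2]; nlinarith [sq_nonneg (ε * ρN - C * d)]
    exact le_of_mul_le_mul_left key hε
  have hdorf' : θ * (1 + ε - q) * (ρR ^ 2 + ρN ^ 2) ≤ (1 + ε - q) * ρR ^ 2 := by
    have h : 0 < 1 + ε - q := by linarith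
    nlinarith
  nlinarith [hsq, hyoung, hred, hdorf']

/-- Abstract estimator reduction under Dörfler marking. -/
theorem estimator_reduction
    (q C θ : ℝ) (hq0 : 0 < q) (hq1 : q < 1) (hC : 0 < C) (hθ0 : 0 < θ) (hθ1 : θ ≤ 1) :
    (∃ qest Cest : ℝ, 0 < qest ∧ qest < 1 ∧ 0 < Cest ∧
      ∀ ρR ρN ρR' ρN' d : ℝ, 0 ≤ ρR → 0 ≤ ρN → 0 ≤ ρR' → 0 ≤ ρN' → 0 ≤ d →
        |ρN' - ρN| ≤ C * d → ρR' ^ 2 ≤ q * ρR ^ 2 + C * d ^ 2 →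
        θ * (ρR ^ 2 + ρN ^ 2) ≤ ρR ^ 2 →
        ρR' ^ 2 + ρN' ^ 2 ≤ qest * (ρR ^ 2 + ρN ^ 2) + Cest * d ^ 2) ∧
    (∀ ε : ℝ, 0 < ε → 1 + ε - θ * (1 + ε - q) < 1 →
      ∃ Cest : ℝ, 0 < Cest ∧
        ∀ ρR ρN ρR' ρN' d : ℝ, 0 ≤ ρR → 0 ≤ ρN → 0 ≤ ρR' → 0 ≤ ρN' → 0 ≤ d →
          |ρN' - ρN| ≤ C * d → ρR' ^ 2 ≤ q * ρR ^ 2 + C * d ^ 2 →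
          θ * (ρR ^ 2 + ρN ^ 2) ≤ ρR ^ 2 →
          ρR' ^ 2 + ρN' ^ 2 ≤ (1 + ε - θ * (1 + ε - q)) * (ρR ^ 2 + ρN ^ 2) + Cest * d ^ 2) := by
  constructor
  · -- choose ε = θ(1-q)/2
    set ε : ℝ := θ * (1 - q) / 2 with hεdef
    have hε : 0 < ε := by
      have h1q : (0:ℝ) < 1 - q := by linarith
      positivity
    refine ⟨1 + ε - θ * (1 + ε - q), C + (1 + 1/ε) * C ^ 2, ?_, ?_, ?_, ?_⟩
    · nlinarith
    · nlinarith
    · have : 0 < 1/ε := by positivity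
      nlinarith
    · exact estimator_core q C θ ε hq0 hq1 hC hθ0 hε
  · intro ε hε _
    refine ⟨C + (1 + 1/ε) * C ^ 2, ?_, estimator_core q C θ ε hq0 hq1 hC hθ0 hε⟩
    have : 0 < 1/ε := by positivity
    nlinarith
end

section
/- Let C_gal, C_est, C_rel > 0 and 0 < q_est < 1 be real numbers. Then there exist γ, μ, C > 0 and 0 < q_lin < 1, depending only on C_gal, C_est, C_rel and q_est, such that for every h ≥ 0 and all nonnegative real numbers e, e', η, η', o, o', d satisfying (a) (e')² ≤ e² − (1/2)·d² + 2·C_gal·(o')², (b) (η')² ≤ q_est·η² + C_est·d², (c) (o')² ≤ q_est·o² + C_est·h²·d², and (d) e² ≤ C_rel·η², one has (e')² + γ·(η')² + μ·(o')² ≤ q_lin·(e² + γ·η² + μ·o²) − (1/4 − C·h²)·d². -/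
/-- Abstract contraction estimate for the weighted sum of energy error,
error estimator, and data oscillations. -/
theorem contraction_weighted_sum
    (Cgal Cest Crel qest : ℝ) (hCgal : 0 < Cgal) (hCest : 0 < Cest)
    (hCrel : 0 < Crel) (hq0 : 0 < qest) (hq1 : qest < 1) :
    ∃ γ μ C qlin : ℝ, 0 < γ ∧ 0 < μ ∧ 0 < C ∧ 0 < qlin ∧ qlin < 1 ∧
      ∀ h e e' η η' o o' d : ℝ,
        0 ≤ h → 0 ≤ e → 0 ≤ e' → 0 ≤ η → 0 ≤ η' → 0 ≤ o → 0 ≤ o' → 0 ≤ d →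
        e' ^ 2 ≤ e ^ 2 - (1 / 2) * d ^ 2 + 2 * Cgal * o' ^ 2 →
        η' ^ 2 ≤ qest * η ^ 2 + Cest * d ^ 2 →
        o' ^ 2 ≤ qest * o ^ 2 + Cest * h ^ 2 * d ^ 2 →
        e ^ 2 ≤ Crel * η ^ 2 →
        e' ^ 2 + γ * η' ^ 2 + μ * o' ^ 2 ≤
          qlin * (e ^ 2 + γ * η ^ 2 + μ * o ^ 2) - (1 / 4 - C * h ^ 2) * d ^ 2 := by
  set γ : ℝ := 1 / (4 * Cest) with hγdef
  have hγpos : 0 < γ := by positivity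
  set θ : ℝ := min (1/2) (γ * (1 - qest) / (2 * Crel)) with hθdef
  have hθpos : 0 < θ := lt_min (by norm_num) (div_pos (mul_pos hγpos (by linarith)) (by positivity))
  set qlin : ℝ := max (1 - θ) (qest + θ * Crel / γ) with hqdef
  have hq2 : qest + θ * Crel / γ < 1 := by
    have h1 : θ ≤ γ * (1 - qest) / (2 * Crel) := min_le_right _ _
    have h2 : θ * Crel / γ ≤ (1 - qest) / 2 := by
      rw [div_le_div_iff₀ hγpos (by norm_num)]
      calc θ * Crel * 2 ≤ (γ * (1 - qest) / (2 * Crel)) * Crel * 2 := by nlinarith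
        _ = (1 - qest) * γ := by field_simp
    linarith
  have hqlt1 : qlin < 1 := max_lt (by linarith) hq2
  have hqgt : qest < qlin := by
    have : qest < qest + θ * Crel / γ := by
      have : 0 < θ * Crel / γ := by positivity
      linarith
    exact lt_of_lt_of_le this (le_max_right _ _)
  have hqpos : 0 < qlin := lt_trans hq0 hqgt
  set μ : ℝ := 2 * Cgal * qest / (qlin - qest) with hμdef
  have hμpos : 0 < μ := by
    apply div_pos (by positivity) (by linarith)
  set C : ℝ := (μ + 2 * Cgal) * Cest with hCdef
  have hCpos : 0 < C := by positivity
  refine ⟨γ, μ, C, qlin, hγpos, hμpos, hCpos, hqpos, hqlt1, ?_⟩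
  intro h e e' η η' o o' d hh he he' hη hη' ho ho' hd ha hb hc hdrel
  -- key constant facts
  have hγC : γ * Cest = 1 / 4 := by
    rw [hγdef]; field_simp
  have hμeq : μ * (qlin - qest) = 2 * Cgal * qest := by
    rw [hμdef, div_mul_cancel₀]
    exact sub_ne_zero.mpr (ne_of_gt hqgt)
  have hμle : (μ + 2 * Cgal) * qest ≤ qlin * μ := by nlinarith
  have hθle : θ * Crel + γ * qest ≤ qlin * γ := by
    have h1 : qest + θ * Crel / γ ≤ qlin := le_max_right _ _
    have := mul_le_mul_of_nonneg_right h1 hγpos.le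
    have hγne : γ ≠ 0 := ne_of_gt hγpos
    calc θ * Crel + γ * qest = (qest + θ * Crel / γ) * γ := by field_simp; ring
      _ ≤ qlin * γ := this
  have h1θ : 1 - θ ≤ qlin := le_max_left _ _
  -- multiplied hypotheses
  have hb' : γ * η' ^ 2 ≤ γ * (qest * η ^ 2 + Cest * d ^ 2) :=
    mul_le_mul_of_nonneg_left hb hγpos.le
  have hc' : (μ + 2 * Cgal) * o' ^ 2 ≤ (μ + 2 * Cgal) * (qest * o ^ 2 + Cest * h ^ 2 * d ^ 2) :=
    mul_le_mul_of_nonneg_left hc (by positivity)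
  have hd' : θ * e ^ 2 ≤ θ * (Crel * η ^ 2) :=
    mul_le_mul_of_nonneg_left hdrel hθpos.le
  have q1 : (1 - θ) * e ^ 2 ≤ qlin * e ^ 2 :=
    mul_le_mul_of_nonneg_right h1θ (sq_nonneg e)
  have q2 : (θ * Crel + γ * qest) * η ^ 2 ≤ qlin * γ * η ^ 2 :=
    mul_le_mul_of_nonneg_right hθle (sq_nonneg η)
  have q3 : (μ + 2 * Cgal) * qest * o ^ 2 ≤ qlin * μ * o ^ 2 :=
    mul_le_mul_of_nonneg_right hμle (sq_nonneg o)
  have eq1 : γ * (Cest * d ^ 2) = (1 / 4) * d ^ 2 := by rw [← mul_assoc, hγC]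
  have eq2 : (μ + 2 * Cgal) * (Cest * h ^ 2 * d ^ 2) = C * h ^ 2 * d ^ 2 := by
    rw [hCdef]; ring
  linarith [ha, hb', hc', hd', q1, q2, q3, eq1, eq2]
end

section
/- Let C_gal, C_est, C_rel > 0 and 0 < q_est < 1 be real numbers. Then there exist constants C* > 0, C_lin > 0 and 0 < q_lin < 1, depending only on C_gal, C_est, C_rel and q_est, with the following property: let h ≥ 0 satisfy C*·h² ≤ 1/4 and let (e_ℓ), (η_ℓ), (o_ℓ), (d_ℓ) be sequences of nonnegative reals such that for all ℓ ∈ ℕ: (a) e_{ℓ+1}² ≤ e_ℓ² − (1/2)·d_ℓ² + 2·C_gal·o_{ℓ+1}², (b) η_{ℓ+1}² ≤ q_est·η_ℓ² + C_est·d_ℓ², (c) o_{ℓ+1}² ≤ q_est·o_ℓ² + C_est·h²·d_ℓ², (d) e_ℓ² ≤ C_rel·η_ℓ², and (e) o_ℓ ≤ η_ℓ. Then η_{ℓ+n}² ≤ C_lin·q_lin^n·η_ℓ² for all ℓ, n ∈ ℕ. -/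
/-- Abstract sequence form of linear convergence of the adaptive FVM. -/
theorem linear_convergence_sequences
    (Cgal Cest Crel qest : ℝ) (hCgal : 0 < Cgal) (hCest : 0 < Cest)
    (hCrel : 0 < Crel) (hq0 : 0 < qest) (hq1 : qest < 1) :
    ∃ Cstar Clin qlin : ℝ, 0 < Cstar ∧ 0 < Clin ∧ 0 < qlin ∧ qlin < 1 ∧
      ∀ h : ℝ, 0 ≤ h → Cstar * h ^ 2 ≤ 1 / 4 →
      ∀ e η o d : ℕ → ℝ,
        (∀ ℓ, 0 ≤ e ℓ) → (∀ ℓ, 0 ≤ η ℓ) → (∀ ℓ, 0 ≤ o ℓ) → (∀ ℓ, 0 ≤ d ℓ) →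
        (∀ ℓ, e (ℓ + 1) ^ 2 ≤ e ℓ ^ 2 - (1 / 2) * d ℓ ^ 2 + 2 * Cgal * o (ℓ + 1) ^ 2) →
        (∀ ℓ, η (ℓ + 1) ^ 2 ≤ qest * η ℓ ^ 2 + Cest * d ℓ ^ 2) →
        (∀ ℓ, o (ℓ + 1) ^ 2 ≤ qest * o ℓ ^ 2 + Cest * h ^ 2 * d ℓ ^ 2) →
        (∀ ℓ, e ℓ ^ 2 ≤ Crel * η ℓ ^ 2) →
        (∀ ℓ, o ℓ ≤ η ℓ) →
        ∀ ℓ n : ℕ, η (ℓ + n) ^ 2 ≤ Clin * qlin ^ n * η ℓ ^ 2 := by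
  have hq1' : (0:ℝ) < 1 - qest := by linarith
  obtain ⟨γ, hγdef⟩ : ∃ γ : ℝ, γ = 1 / (4 * Cest) := ⟨_, rfl⟩
  obtain ⟨β, hβdef⟩ : ∃ β : ℝ, β = 4 * Cgal / (1 - qest) := ⟨_, rfl⟩
  obtain ⟨ε, hεdef⟩ : ∃ ε : ℝ, ε = min ((1 - qest) / (8 * Cest * Crel)) (1 / 2) := ⟨_, rfl⟩
  obtain ⟨qlin, hqdef⟩ : ∃ q : ℝ, q = max (1 - ε) ((1 + qest) / 2) := ⟨_, rfl⟩
  have hγ : 0 < γ := by rw [hγdef]; positivity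
  have hβ : 0 < β := by rw [hβdef]; positivity
  have hε : 0 < ε := by
    rw [hεdef]
    apply lt_min
    · positivity
    · norm_num
  have hεhalf : ε ≤ 1 / 2 := hεdef ▸ min_le_right _ _
  have hγC : γ * Cest = 1 / 4 := by rw [hγdef]; field_simp
  have hβC : β * (1 - qest) = 4 * Cgal := by rw [hβdef]; field_simp
  have hεC : ε * Crel ≤ γ * (1 - qest) / 2 := by
    have h1 : ε ≤ (1 - qest) / (8 * Cest * Crel) := hεdef ▸ min_le_left _ _
    have h2 : ε * Crel ≤ (1 - qest) / (8 * Cest * Crel) * Crel :=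
      mul_le_mul_of_nonneg_right h1 hCrel.le
    have h3 : (1 - qest) / (8 * Cest * Crel) * Crel = γ * (1 - qest) / 2 := by
      rw [hγdef]; field_simp; ring
    linarith [h3 ▸ h2]
  have hqpos : 0 < qlin :=
    lt_of_lt_of_le (by linarith : (0:ℝ) < (1 + qest) / 2) (hqdef ▸ le_max_right _ _)
  have hqlt : qlin < 1 := by
    rw [hqdef]
    apply max_lt
    · linarith
    · linarith
  have hq_e : 1 - ε ≤ qlin := hqdef ▸ le_max_left _ _
  have hq_m : (1 + qest) / 2 ≤ qlin := hqdef ▸ le_max_right _ _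
  refine ⟨(2 * Cgal + β) * Cest, (Crel + γ + β) / γ, qlin, by positivity, by positivity,
    hqpos, hqlt, ?_⟩
  intro h hh hsmall e η o d he hη ho hd ha hb hc hrel hoe
  -- one-step contraction of the Lyapunov function Λ ℓ = e ℓ² + γ η ℓ² + β o ℓ²
  have hstep : ∀ ℓ, e (ℓ+1) ^ 2 + γ * η (ℓ+1) ^ 2 + β * o (ℓ+1) ^ 2 ≤
      qlin * (e ℓ ^ 2 + γ * η ℓ ^ 2 + β * o ℓ ^ 2) := by
    intro ℓ
    have h1 := ha ℓ
    have h2 : γ * η (ℓ + 1) ^ 2 ≤ γ * (qest * η ℓ ^ 2 + Cest * d ℓ ^ 2) :=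
      mul_le_mul_of_nonneg_left (hb ℓ) hγ.le
    have h3 : (2 * Cgal + β) * o (ℓ + 1) ^ 2 ≤
        (2 * Cgal + β) * (qest * o ℓ ^ 2 + Cest * h ^ 2 * d ℓ ^ 2) :=
      mul_le_mul_of_nonneg_left (hc ℓ) (by positivity)
    have hdcoef : (γ * Cest + (2 * Cgal + β) * Cest * h ^ 2 - 1 / 2) * d ℓ ^ 2 ≤ 0 := by
      apply mul_nonpos_of_nonpos_of_nonneg _ (sq_nonneg _)
      have hs : (2 * Cgal + β) * Cest * h ^ 2 ≤ 1 / 4 := hsmall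
      linarith
    have h4 : ε * e ℓ ^ 2 ≤ ε * (Crel * η ℓ ^ 2) :=
      mul_le_mul_of_nonneg_left (hrel ℓ) hε.le
    have hecoef : (1 - ε - qlin) * e ℓ ^ 2 ≤ 0 :=
      mul_nonpos_of_nonpos_of_nonneg (by linarith) (sq_nonneg _)
    have hηcoef : (ε * Crel + γ * qest - qlin * γ) * η ℓ ^ 2 ≤ 0 := by
      apply mul_nonpos_of_nonpos_of_nonneg _ (sq_nonneg _)
      have hm := mul_le_mul_of_nonneg_right hq_m hγ.le
      linarith
    have hocoef : ((2 * Cgal + β) * qest - qlin * β) * o ℓ ^ 2 ≤ 0 := by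
      apply mul_nonpos_of_nonpos_of_nonneg _ (sq_nonneg _)
      have hm := mul_le_mul_of_nonneg_right hq_m hβ.le
      have key : (2 * Cgal + β) * qest ≤ (1 + qest) / 2 * β := by
        nlinarith [hβC, mul_nonneg hβ.le (sq_nonneg (1 - qest))]
      linarith
    linarith [h1, h2, h3, hdcoef, h4, hecoef, hηcoef, hocoef]
  -- iterate
  have hiter : ∀ ℓ n, e (ℓ+n) ^ 2 + γ * η (ℓ+n) ^ 2 + β * o (ℓ+n) ^ 2 ≤
      qlin ^ n * (e ℓ ^ 2 + γ * η ℓ ^ 2 + β * o ℓ ^ 2) := by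
    intro ℓ n
    induction n with
    | zero => simp
    | succ n ih =>
      have hs := hstep (ℓ + n)
      have : ℓ + (n + 1) = (ℓ + n) + 1 := by omega
      rw [this]
      calc e ((ℓ+n)+1) ^ 2 + γ * η ((ℓ+n)+1) ^ 2 + β * o ((ℓ+n)+1) ^ 2
          ≤ qlin * (e (ℓ+n) ^ 2 + γ * η (ℓ+n) ^ 2 + β * o (ℓ+n) ^ 2) := hs
        _ ≤ qlin * (qlin ^ n * (e ℓ ^ 2 + γ * η ℓ ^ 2 + β * o ℓ ^ 2)) :=
            mul_le_mul_of_nonneg_left ih hqpos.le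
        _ = qlin ^ (n + 1) * (e ℓ ^ 2 + γ * η ℓ ^ 2 + β * o ℓ ^ 2) := by ring
  intro ℓ n
  have hlow : γ * η (ℓ + n) ^ 2 ≤
      e (ℓ+n) ^ 2 + γ * η (ℓ+n) ^ 2 + β * o (ℓ+n) ^ 2 := by
    linarith [sq_nonneg (e (ℓ + n)), mul_nonneg hβ.le (sq_nonneg (o (ℓ + n)))]
  have hup : e ℓ ^ 2 + γ * η ℓ ^ 2 + β * o ℓ ^ 2 ≤ (Crel + γ + β) * η ℓ ^ 2 := by
    have h1 := hrel ℓ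
    have h2 : o ℓ ^ 2 ≤ η ℓ ^ 2 := pow_le_pow_left₀ (ho ℓ) (hoe ℓ) 2
    have h3 : β * o ℓ ^ 2 ≤ β * η ℓ ^ 2 := mul_le_mul_of_nonneg_left h2 hβ.le
    linarith
  have hqn : (0:ℝ) ≤ qlin ^ n := pow_nonneg hqpos.le n
  have hmain : γ * η (ℓ + n) ^ 2 ≤ qlin ^ n * ((Crel + γ + β) * η ℓ ^ 2) :=
    le_trans hlow (le_trans (hiter ℓ n) (mul_le_mul_of_nonneg_left hup hqn))
  rw [div_mul_eq_mul_div, div_mul_eq_mul_div, le_div_iff₀ hγ]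
  linarith [hmain]
end

section
/- Let X be a real normed vector space, u ∈ X, (u_k)_{k∈ℕ} a sequence in X, and (η_k)_{k∈ℕ} a sequence of nonnegative reals. Assume there are constants C_rel, C_lin > 0 and 0 < q < 1 such that ‖u − u_k‖² ≤ C_rel·η_k² for all k ∈ ℕ and η_{ℓ+n}² ≤ C_lin·qⁿ·η_ℓ² for all ℓ, n ∈ ℕ. Then for every ℓ ∈ ℕ the series Σ_{k=ℓ}^∞ ‖u_{k+1} − u_k‖² converges and Σ_{k=ℓ}^∞ ‖u_{k+1} − u_k‖² ≤ (4·C_rel·C_lin/(1−q))·η_ℓ². -/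
/-- Abstract general quasi-orthogonality from reliability and linear convergence. -/
theorem general_quasi_orthogonality
    {X : Type*} [NormedAddCommGroup X] [NormedSpace ℝ X]
    (u : X) (uk : ℕ → X) (η : ℕ → ℝ) (hη : ∀ k, 0 ≤ η k)
    (Crel Clin q : ℝ) (hCrel : 0 < Crel) (hClin : 0 < Clin) (hq0 : 0 < q) (hq1 : q < 1)
    (hrel : ∀ k, ‖u - uk k‖ ^ 2 ≤ Crel * η k ^ 2)
    (hlin : ∀ ℓ n : ℕ, η (ℓ + n) ^ 2 ≤ Clin * q ^ n * η ℓ ^ 2) :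
    ∀ ℓ : ℕ, Summable (fun k : ℕ => ‖uk (ℓ + k + 1) - uk (ℓ + k)‖ ^ 2) ∧
      ∑' k : ℕ, ‖uk (ℓ + k + 1) - uk (ℓ + k)‖ ^ 2 ≤
        4 * Crel * Clin / (1 - q) * η ℓ ^ 2 := by
  intro ℓ
  -- termwise bound
  have hbound : ∀ k : ℕ, ‖uk (ℓ + k + 1) - uk (ℓ + k)‖ ^ 2 ≤
      4 * Crel * Clin * η ℓ ^ 2 * q ^ k := by
    intro k
    have htri : ‖uk (ℓ + k + 1) - uk (ℓ + k)‖ ≤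
        ‖u - uk (ℓ + k + 1)‖ + ‖u - uk (ℓ + k)‖ := by
      have : uk (ℓ + k + 1) - uk (ℓ + k) =
          (u - uk (ℓ + k)) - (u - uk (ℓ + k + 1)) := by abel
      rw [this]
      calc ‖(u - uk (ℓ + k)) - (u - uk (ℓ + k + 1))‖
          ≤ ‖u - uk (ℓ + k)‖ + ‖u - uk (ℓ + k + 1)‖ := norm_sub_le _ _
        _ = ‖u - uk (ℓ + k + 1)‖ + ‖u - uk (ℓ + k)‖ := by ring
    have h1 : ‖uk (ℓ + k + 1) - uk (ℓ + k)‖ ^ 2 ≤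
        2 * ‖u - uk (ℓ + k + 1)‖ ^ 2 + 2 * ‖u - uk (ℓ + k)‖ ^ 2 := by
      have := sq_nonneg (‖u - uk (ℓ + k + 1)‖ - ‖u - uk (ℓ + k)‖)
      nlinarith [norm_nonneg (uk (ℓ + k + 1) - uk (ℓ + k)), norm_nonneg (u - uk (ℓ + k + 1)),
        norm_nonneg (u - uk (ℓ + k))]
    have h2 : ‖u - uk (ℓ + k + 1)‖ ^ 2 ≤ Crel * (Clin * q ^ (k + 1) * η ℓ ^ 2) := by
      calc ‖u - uk (ℓ + k + 1)‖ ^ 2 ≤ Crel * η (ℓ + k + 1) ^ 2 := hrel _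
        _ ≤ Crel * (Clin * q ^ (k + 1) * η ℓ ^ 2) := by
            have := hlin ℓ (k + 1)
            have h := mul_le_mul_of_nonneg_left this hCrel.le
            simpa [add_assoc] using h
    have h3 : ‖u - uk (ℓ + k)‖ ^ 2 ≤ Crel * (Clin * q ^ k * η ℓ ^ 2) := by
      calc ‖u - uk (ℓ + k)‖ ^ 2 ≤ Crel * η (ℓ + k) ^ 2 := hrel _
        _ ≤ Crel * (Clin * q ^ k * η ℓ ^ 2) :=
            mul_le_mul_of_nonneg_left (hlin ℓ k) hCrel.le
    have hqk : (0:ℝ) ≤ q ^ k := pow_nonneg hq0.le k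
    have hq1' : q ^ (k + 1) ≤ q ^ k := by
      calc q ^ (k + 1) = q ^ k * q := pow_succ q k
        _ ≤ q ^ k * 1 := by nlinarith
        _ = q ^ k := mul_one _
    have hkey : Crel * (Clin * q ^ (k+1) * η ℓ ^ 2) ≤ Crel * (Clin * q ^ k * η ℓ ^ 2) := by
      have h0 : (0:ℝ) ≤ Crel * Clin * η ℓ ^ 2 := by positivity
      nlinarith [mul_le_mul_of_nonneg_left hq1' h0]
    linarith
  have hgs : Summable (fun k : ℕ => 4 * Crel * Clin * η ℓ ^ 2 * q ^ k) :=
    (summable_geometric_of_lt_one hq0.le hq1).mul_left _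
  have hnn : ∀ k : ℕ, 0 ≤ ‖uk (ℓ + k + 1) - uk (ℓ + k)‖ ^ 2 := fun k => sq_nonneg _
  have hsum : Summable (fun k : ℕ => ‖uk (ℓ + k + 1) - uk (ℓ + k)‖ ^ 2) :=
    Summable.of_nonneg_of_le hnn hbound hgs
  refine ⟨hsum, ?_⟩
  calc ∑' k : ℕ, ‖uk (ℓ + k + 1) - uk (ℓ + k)‖ ^ 2
      ≤ ∑' k : ℕ, 4 * Crel * Clin * η ℓ ^ 2 * q ^ k := Summable.tsum_le_tsum hbound hsum hgs
    _ = 4 * Crel * Clin * η ℓ ^ 2 * (1 - q)⁻¹ := by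
        rw [tsum_mul_left, tsum_geometric_of_lt_one hq0.le hq1]
    _ = 4 * Crel * Clin / (1 - q) * η ℓ ^ 2 := by ring
end
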